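/- arXiv:2008.10718 — 2 statements merged into one kernel-verified Lean document; each statement's English description precedes it below -/
import Mathlib

section
/- Let b be an odd integer, p a prime with p ≡ 1 (mod 4), and x, y, u, v integers with p = x² + (b²+4)y² = u² + v², p ≠ b² + 4, u ≡ 1 (mod 4), and the odd parts of x, y, v all ≡ 1 (mod 4). If the conclusion C(b) of Sun's Conjecture 1 (defined in the context) holds, then C(−b) holds. -/
/-!
Replacing `b` by `-b` multiplies `U_n(b,-1)` by `(-1)^(n+1)` and `V_n(b,-1)` by `(-1)^n`, and swaps
the residue classes `{1,3}` and `{5,7}` modulo 8. For `n = (p-1)/4` the parity of `n` is that of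
`p` modulo 8, and since `b² + 4 ≡ 5 (mod 8)` we get `p ≡ x² + 5y² (mod 8)`: thus `p ≡ 1 (mod 8)`
when `2 ‖ x` or `4 ∣ y`, and `p ≡ 5 (mod 8)` when `4 ∣ x` or `2 ‖ y`. In each clause of `C(b)` the
resulting sign is exactly the one by which that clause differs from the same clause of `C(-b)`.
-/

/-- The Lucas sequence `U_n(b,c)`: `U_0 = 0`, `U_1 = 1`,
`U_{n+1} = b·U_n − c·U_{n−1}`. -/
def lucasU (b c : ℤ) : ℕ → ℤ
  | 0 => 0
  | 1 => 1
  | n + 2 => b * lucasU b c (n + 1) - c * lucasU b c n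

/-- The Lucas sequence `V_n(b,c)`: `V_0 = 2`, `V_1 = b`,
`V_{n+1} = b·V_n − c·V_{n−1}`. -/
def lucasV (b c : ℤ) : ℕ → ℤ
  | 0 => 2
  | 1 => b
  | n + 2 => b * lucasV b c (n + 1) - c * lucasV b c n

/-- The odd part of an integer `m`, i.e. `m / 2^(v₂ m)`. -/
def oddPart (m : ℤ) : ℤ := m / 2 ^ padicValInt 2 m

/-- `2‖m`: `2` divides `m` but `4` does not. -/
def ExactlyTwo (m : ℤ) : Prop := 2 ∣ m ∧ ¬ (4 ∣ m)

/-- The conclusion `C(β)` of Sun's Conjecture 1, relative to fixed `p, x, y, u, v`. -/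
def Conj1Concl (p : ℕ) (x y u v β : ℤ) : Prop :=
  (¬ (4 ∣ x * y) →
    (p : ℤ) ∣ lucasV β (-1) ((p - 1) / 4) ∧
    ((ExactlyTwo x ∧ (β % 8 = 1 ∨ β % 8 = 3)) →
      x * lucasU β (-1) ((p - 1) / 4) ≡ (-1) ^ (v / 4).natAbs * (2 * y) [ZMOD (p : ℤ)]) ∧
    ((ExactlyTwo x ∧ (β % 8 = 5 ∨ β % 8 = 7)) →
      x * lucasU β (-1) ((p - 1) / 4) ≡ -((-1) ^ (v / 4).natAbs * (2 * y)) [ZMOD (p : ℤ)]) ∧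
    (ExactlyTwo y →
      x * u * lucasU β (-1) ((p - 1) / 4) ≡ 2 * y * v [ZMOD (p : ℤ)])) ∧
  (4 ∣ x * y →
    (p : ℤ) ∣ lucasU β (-1) ((p - 1) / 4) ∧
    (4 ∣ y →
      lucasV β (-1) ((p - 1) / 4) ≡ 2 * (-1) ^ ((y + v) / 4).natAbs [ZMOD (p : ℤ)]) ∧
    ((4 ∣ x ∧ (β % 8 = 1 ∨ β % 8 = 3)) →
      u * lucasV β (-1) ((p - 1) / 4) ≡ -(2 * (-1) ^ (x / 4).natAbs * v) [ZMOD (p : ℤ)]) ∧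
    ((4 ∣ x ∧ (β % 8 = 5 ∨ β % 8 = 7)) →
      u * lucasV β (-1) ((p - 1) / 4) ≡ 2 * (-1) ^ (x / 4).natAbs * v [ZMOD (p : ℤ)]))


theorem lucasU_neg (b c : ℤ) : ∀ n, lucasU (-b) c n = (-1) ^ (n + 1) * lucasU b c n
  | 0 => by simp [lucasU]
  | 1 => by simp [lucasU]
  | n + 2 => by
    simp only [lucasU, lucasU_neg b c (n + 1), lucasU_neg b c n]
    ring

theorem lucasV_neg (b c : ℤ) : ∀ n, lucasV (-b) c n = (-1) ^ n * lucasV b c n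
  | 0 => by simp [lucasV]
  | 1 => by simp [lucasV]
  | n + 2 => by
    simp only [lucasV, lucasV_neg b c (n + 1), lucasV_neg b c n]
    ring

theorem Int.sq_modEq_sq_emod_four (z : ℤ) : z ^ 2 ≡ (z % 4) ^ 2 [ZMOD 8] := by
  have hz : z ^ 2 = (z % 4) ^ 2 + 8 * (z / 4 * (2 * (z / 4) + z % 4)) := by
    conv_lhs => rw [← Int.emod_add_mul_ediv z 4]
    ring
  rw [hz]
  exact Int.add_mul_emod_self_left _ _ _

theorem sq_add_mul_sq_modEq_eight {b : ℤ} (hb : Odd b) (x y : ℤ) :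
    x ^ 2 + (b ^ 2 + 4) * y ^ 2 ≡ (x % 4) ^ 2 + 5 * (y % 4) ^ 2 [ZMOD 8] := by
  obtain ⟨k, rfl⟩ := hb
  obtain ⟨m, hm⟩ := (Int.even_mul_succ_self k).two_dvd
  have h : x ^ 2 + ((2 * k + 1) ^ 2 + 4) * y ^ 2 = x ^ 2 + 5 * y ^ 2 + 8 * (m * y ^ 2) := by
    linear_combination 4 * y ^ 2 * hm
  rw [h]
  exact (Int.add_mul_emod_self_left _ _ _).trans
    ((Int.sq_modEq_sq_emod_four x).add ((Int.sq_modEq_sq_emod_four y).mul_left 5))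

theorem even_sub_one_div_four {p : ℕ} {b x y : ℤ} (hp4 : p % 4 = 1) (hb : Odd b)
    (hpx : (p : ℤ) = x ^ 2 + (b ^ 2 + 4) * y ^ 2) (h : x % 4 = 2 ∨ y % 4 = 0) :
    Even ((p - 1) / 4) := by
  have h8 : (p : ℤ) % 8 = ((x % 4) ^ 2 + 5 * (y % 4) ^ 2) % 8 :=
    hpx ▸ sq_add_mul_sq_modEq_eight hb x y
  rw [Nat.even_iff]
  rcases (by omega : x % 4 = 0 ∨ x % 4 = 1 ∨ x % 4 = 2 ∨ x % 4 = 3) with hx | hx | hx | hx <;>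
  rcases (by omega : y % 4 = 0 ∨ y % 4 = 1 ∨ y % 4 = 2 ∨ y % 4 = 3) with hy | hy | hy | hy <;>
  rw [hx, hy] at h8 <;> omega

theorem odd_sub_one_div_four {p : ℕ} {b x y : ℤ} (hp4 : p % 4 = 1) (hb : Odd b)
    (hpx : (p : ℤ) = x ^ 2 + (b ^ 2 + 4) * y ^ 2) (h : x % 4 = 0 ∨ y % 4 = 2) :
    Odd ((p - 1) / 4) := by
  have h8 : (p : ℤ) % 8 = ((x % 4) ^ 2 + 5 * (y % 4) ^ 2) % 8 :=
    hpx ▸ sq_add_mul_sq_modEq_eight hb x y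
  rw [Nat.odd_iff]
  rcases (by omega : x % 4 = 0 ∨ x % 4 = 1 ∨ x % 4 = 2 ∨ x % 4 = 3) with hx | hx | hx | hx <;>
  rcases (by omega : y % 4 = 0 ∨ y % 4 = 1 ∨ y % 4 = 2 ∨ y % 4 = 3) with hy | hy | hy | hy <;>
  rw [hx, hy] at h8 <;> omega

theorem conj1Concl_neg {p : ℕ} {x y u v b : ℤ}
    (heven : x % 4 = 2 ∨ y % 4 = 0 → Even ((p - 1) / 4))
    (hodd : x % 4 = 0 ∨ y % 4 = 2 → Odd ((p - 1) / 4))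
    (hC : Conj1Concl p x y u v b) : Conj1Concl p x y u v (-b) := by
  obtain ⟨hC₁, hC₂⟩ := hC
  simp only [Conj1Concl, ExactlyTwo, lucasU_neg, lucasV_neg] at hC₁ hC₂ ⊢
  refine ⟨fun h4 => ?_, fun h4 => ?_⟩
  · obtain ⟨hV, hU₁₃, hU₅₇, hUy⟩ := hC₁ h4
    refine ⟨hV.mul_left _, fun ⟨hx, hβ⟩ => ?_, fun ⟨hx, hβ⟩ => ?_, fun hy => ?_⟩
    · rw [(heven (by omega)).add_one.neg_one_pow]
      simpa using (hU₅₇ ⟨hx, by omega⟩).neg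
    · rw [(heven (by omega)).add_one.neg_one_pow]
      simpa using (hU₁₃ ⟨hx, by omega⟩).neg
    · rw [(hodd (by omega)).add_one.neg_one_pow, one_mul]
      exact hUy hy
  · obtain ⟨hU, hVy, hV₁₃, hV₅₇⟩ := hC₂ h4
    refine ⟨hU.mul_left _, fun hy => ?_, fun ⟨hx, hβ⟩ => ?_, fun ⟨hx, hβ⟩ => ?_⟩
    · rw [(heven (by omega)).neg_one_pow, one_mul]
      exact hVy hy
    · rw [(hodd (by omega)).neg_one_pow]
      simpa using (hV₅₇ ⟨hx, by omega⟩).neg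
    · rw [(hodd (by omega)).neg_one_pow]
      simpa using (hV₁₃ ⟨hx, by omega⟩).neg

theorem statement6_general (p : ℕ) (hp4 : p % 4 = 1)
    (b x y u v : ℤ) (hb : Odd b)
    (hpx : (p : ℤ) = x ^ 2 + (b ^ 2 + 4) * y ^ 2)
    (hC : Conj1Concl p x y u v b) :
    Conj1Concl p x y u v (-b) :=
  conj1Concl_neg (even_sub_one_div_four hp4 hb hpx) (odd_sub_one_div_four hp4 hb hpx) hC

theorem statement6 (p : ℕ) (hp : p.Prime) (hp4 : p % 4 = 1)
    (b x y u v : ℤ) (hb : Odd b)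
    (hpx : (p : ℤ) = x ^ 2 + (b ^ 2 + 4) * y ^ 2)
    (hpu : (p : ℤ) = u ^ 2 + v ^ 2)
    (hne : (p : ℤ) ≠ b ^ 2 + 4)
    (hu : u ≡ 1 [ZMOD 4])
    (hx : oddPart x ≡ 1 [ZMOD 4])
    (hy : oddPart y ≡ 1 [ZMOD 4])
    (hv : oddPart v ≡ 1 [ZMOD 4])
    (hC : Conj1Concl p x y u v b) :
    Conj1Concl p x y u v (-b) :=
  statement6_general p hp4 b x y u v hb hpx hC
end

section
/- Let ℤ₂ denote the ring of 2-adic integers and R = ℤ₂[i] = ℤ₂[X]/(X²+1) the ring of integers of ℚ₂(i). Let α, β, α', β' ∈ ℤ₂ satisfy α² + β² = α'² + β'² = 1. Assume either (a) α and α' are units of ℤ₂, α ≡ α' (mod 4), and β ≡ β' (mod 8), or (b) β and β' are units of ℤ₂, β ≡ β' (mod 4), and α ≡ α' (mod 8). Then α + β·i is a unit of R, and there exist an integer t and an element B ∈ R with B ≡ 1 (mod (2+2i)·R) such that (α' + β'·i) = 5^{2t}·B⁴·(α + β·i), where 5^{2t} denotes the 2t-th power of the unit 5 in ℤ₂ (t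 may be negative). -/
open Polynomial

/-- The ring `ℤ₂[i] = ℤ₂[X]/(X²+1)`, the ring of integers of `ℚ₂(i)`. -/
abbrev Z2i : Type := AdjoinRoot (X ^ 2 + 1 : ℤ_[2][X])

/-- The element `i` of `ℤ₂[i]`. -/
noncomputable abbrev Z2i.i : Z2i := AdjoinRoot.root _

/-- The canonical map `ℤ₂ → ℤ₂[i]`. -/
noncomputable abbrev Z2i.of : ℤ_[2] →+* Z2i := AdjoinRoot.of _

/-!
Put `w = a + b i`, `w' = a' + b' i`. Since `w w̄ = 1`, `w' = (c + d i) w` with `c + d i = w' w̄`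
of norm one, and the congruences give `4 ∣ c - 1`, `8 ∣ d`; the norm equation then forces
`32 ∣ c - 1`. Write `c + d i = 1 + 8 u + 8 v i`; dividing by `25 = 5 ^ 2` if `v` is odd, we may
assume `u ≡ v mod 2`. Such an element is `B ^ 4` with `B = ±(1 + 4 y)(1 + 2 z i)`: Hensel's lemma
first gives `z ≡ v mod 2` making `(1 + 2 z i) ^ 4` a real multiple of `1 + 8 u + 8 v i`, and then
`y` with `(1 + 4 y) ^ 4` equal to that multiple, which is `≡ 1 mod 16`.
-/

namespace PadicInt

variable {p : ℕ} [Fact p.Prime]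

theorem isUnit_iff_not_dvd {x : ℤ_[p]} : IsUnit x ↔ ¬ (p : ℤ_[p]) ∣ x := by
  rw [← norm_lt_one_iff_dvd, not_lt, isUnit_iff]
  exact ⟨ge_of_eq, (norm_le_one x).antisymm⟩

theorem isUnit_of_dvd_sub_one {x : ℤ_[p]} (h : (p : ℤ_[p]) ∣ x - 1) : IsUnit x :=
  isUnit_iff_not_dvd.mpr fun hx => prime_p.not_dvd_one (by simpa using dvd_sub hx h)

theorem exists_root_dvd_sub (F : ℤ_[p][X]) (a : ℤ_[p]) (hF : (p : ℤ_[p]) ∣ F.eval a)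
    (hF' : IsUnit (F.derivative.eval a)) :
    ∃ z, F.eval z = 0 ∧ (p : ℤ_[p]) ∣ z - a := by
  have hunit : ‖F.derivative.eval a‖ = 1 := isUnit_iff.mp hF'
  have hnorm : ‖F.aeval a‖ < ‖F.derivative.aeval a‖ ^ 2 := by
    simpa [hunit] using (norm_lt_one_iff_dvd _).mpr hF
  obtain ⟨z, hz, hza, -⟩ := hensels_lemma hnorm
  exact ⟨z, by simpa using hz, (norm_lt_one_iff_dvd _).mp (by simpa [hunit] using hza)⟩

theorem two_dvd_or_two_dvd_sub_one (x : ℤ_[2]) : 2 ∣ x ∨ 2 ∣ x - 1 := by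
  obtain ⟨n, hn, hx⟩ := exists_mem_range x
  rw [maximalIdeal_eq_span_p, Ideal.mem_span_singleton] at hx
  interval_cases n <;> simp_all

theorem two_dvd_mul_add_one (k : ℤ_[2]) : 2 ∣ k * (k + 1) := by
  rcases two_dvd_or_two_dvd_sub_one k with h | h
  · exact h.mul_right _
  · have : (2 : ℤ_[2]) ∣ k + 1 := by convert dvd_add h (dvd_refl 2) using 1; ring
    exact this.mul_left _

theorem prime_two : Prime (2 : ℤ_[2]) := by exact_mod_cast prime_p (p := 2)

theorem four_dvd_of_isUnit_of_sq_add_sq_eq_one {a b : ℤ_[2]} (ha : IsUnit a)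
    (h : a ^ 2 + b ^ 2 = 1) : 4 ∣ b := by
  obtain ⟨k, hk⟩ := (two_dvd_or_two_dvd_sub_one a).resolve_left
    (by exact_mod_cast isUnit_iff_not_dvd.mp ha)
  obtain ⟨j, hj⟩ := two_dvd_mul_add_one k
  have hb2 : b ^ 2 = 2 * (-4 * j) := by linear_combination h - (a + 1 + 2 * k) * hk - 4 * hj
  obtain ⟨m, rfl⟩ := prime_two.dvd_of_dvd_pow (Dvd.intro _ hb2.symm)
  have hm2 : m ^ 2 = 2 * -j := mul_left_cancel₀ (by norm_num : (4 : ℤ_[2]) ≠ 0)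
    (by linear_combination hb2)
  obtain ⟨n, rfl⟩ := prime_two.dvd_of_dvd_pow (Dvd.intro _ hm2.symm)
  exact ⟨n, by ring⟩

theorem thirty_two_dvd_sub_one {c d : ℤ_[2]} (h : c ^ 2 + d ^ 2 = 1) (hc : 4 ∣ c - 1)
    (hd : 8 ∣ d) : 32 ∣ c - 1 := by
  obtain ⟨e, he⟩ := hc
  obtain ⟨D, rfl⟩ := hd
  -- `e = -2 e ^ 2 - 8 D ^ 2`, so first `2 ∣ e`, and then `8 ∣ e`
  have he' : e = -2 * e ^ 2 - 8 * D ^ 2 := mul_left_cancel₀ (by norm_num : (8 : ℤ_[2]) ≠ 0)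
    (by linear_combination h - (c + 1 + 4 * e) * he)
  exact ⟨-(e ^ 2 + 4 * D ^ 2) ^ 2 - D ^ 2,
    by linear_combination he + 4 * he' - 8 * (e - 2 * (e ^ 2 + 4 * D ^ 2)) * he'⟩

theorem four_dvd_sub_one_and_eight_dvd {a b a' b' : ℤ_[2]} (ha : IsUnit a)
    (h : a ^ 2 + b ^ 2 = 1) (haa : 4 ∣ a - a') (hbb : 8 ∣ b - b') :
    4 ∣ a * a' + b * b' - 1 ∧ 8 ∣ a * b' - a' * b := by
  obtain ⟨k, hk⟩ := haa
  obtain ⟨l, hl⟩ := hbb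
  obtain ⟨m, hm⟩ := four_dvd_of_isUnit_of_sq_add_sq_eq_one ha h
  exact ⟨⟨-a * k - 2 * b * l, by linear_combination h - a * hk - b * hl⟩,
    ⟨-a * l + 2 * m * k, by linear_combination -a * hl + b * hk + 4 * k * hm⟩⟩

theorem exists_one_add_four_mul_pow_four_eq (k : ℤ_[2]) :
    ∃ y, (1 + 4 * y) ^ 4 = 1 + 16 * k := by
  obtain ⟨y, hy, -⟩ := exists_root_dvd_sub (p := 2)
    (X + C 6 * X ^ 2 + C 16 * X ^ 3 + C 16 * X ^ 4 - C k) k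
    ⟨3 * k ^ 2 + 8 * k ^ 3 + 8 * k ^ 4, by
      simp only [eval_sub, eval_add, eval_mul, eval_pow, eval_C, eval_X]; ring⟩
    (isUnit_of_dvd_sub_one ⟨6 * k + 24 * k ^ 2 + 32 * k ^ 3, by
      simp only [eval_sub, eval_add, eval_mul, eval_pow, eval_C, eval_X, eval_one, eval_zero,
        derivative_sub, derivative_add, derivative_mul, derivative_C, derivative_X,
        derivative_X_pow]
      ring⟩)
  refine ⟨y, ?_⟩
  simp only [eval_sub, eval_add, eval_mul, eval_pow, eval_C, eval_X] at hy
  linear_combination 16 * hy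

/-- Since `(1 + 2 z i) ^ 4 = (1 - 24 z ^ 2 + 16 z ^ 4) + 8 (z - 4 z ^ 3) i`, the equation says
that `(1 + 2 z i) ^ 4` is a real multiple of `1 + 8 u + 8 v i`. -/
theorem exists_tangent_match (u v : ℤ_[2]) :
    ∃ z, (1 + 8 * u) * (z - 4 * z ^ 3) = v * (1 - 24 * z ^ 2 + 16 * z ^ 4) ∧ 2 ∣ z - v := by
  obtain ⟨z, hz, hzv⟩ := exists_root_dvd_sub (p := 2)
    (C (1 + 8 * u) * (X - C 4 * X ^ 3) - C v * (1 - C 24 * X ^ 2 + C 16 * X ^ 4)) v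
    ⟨4 * u * v + 10 * v ^ 3 - 16 * u * v ^ 3 - 8 * v ^ 5, by
      simp only [eval_sub, eval_add, eval_mul, eval_pow, eval_C, eval_X, eval_one]; ring⟩
    (isUnit_of_dvd_sub_one ⟨4 * u - 6 * (1 + 8 * u) * v ^ 2 + 24 * v ^ 2 - 32 * v ^ 4, by
      simp only [eval_sub, eval_add, eval_mul, eval_pow, eval_C, eval_X, eval_one, eval_zero,
        derivative_sub, derivative_add, derivative_mul, derivative_C, derivative_X,
        derivative_X_pow, derivative_one]
      ring⟩)
  simp only [eval_sub, eval_add, eval_mul, eval_pow, eval_C, eval_X, eval_one] at hz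
  exact ⟨z, by linear_combination hz, by exact_mod_cast hzv⟩

end PadicInt

namespace Z2i

theorem isUnit_five : IsUnit (5 : Z2i) := by
  rw [← map_ofNat of 5]
  exact (PadicInt.isUnit_of_dvd_sub_one (x := 5) ⟨2, by norm_num⟩).map of

theorem i_sq : i ^ 2 = -1 := by
  have h := AdjoinRoot.eval₂_root (X ^ 2 + 1 : ℤ_[2][X])
  simp only [eval₂_add, eval₂_X_pow, eval₂_one] at h
  linear_combination h

theorem mul_conj (a b a' b' : ℤ_[2]) : (of a' + of b' * i) * (of a - of b * i) =
    of (a * a' + b * b') + of (a * b' - a' * b) * i := by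
  simp only [map_add, map_sub, map_mul]
  linear_combination (-(of b * of b')) * i_sq

theorem one_add_two_mul_i_pow_four (z : ℤ_[2]) : (1 + of (2 * z) * i) ^ 4 =
    of (1 - 24 * z ^ 2 + 16 * z ^ 4) + of (8 * (z - 4 * z ^ 3)) * i := by
  simp only [map_add, map_sub, map_mul, map_pow, map_one, map_ofNat]
  linear_combination (24 * of z ^ 2 + 32 * of z ^ 3 * i + 16 * of z ^ 4 * (i ^ 2 - 1)) * i_sq

theorem exists_sign_mul_sub_one_mem (y z : ℤ_[2]) : ∃ s : Z2i, s ^ 4 = 1 ∧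
    s * (of (1 + 4 * y) * (1 + of (2 * z) * i)) - 1 ∈ Ideal.span {2 + 2 * i} := by
  rcases PadicInt.two_dvd_or_two_dvd_sub_one z with ⟨k, hk⟩ | ⟨k, hk⟩
  · refine ⟨1, one_pow 4, Ideal.mem_span_singleton'.mpr
      ⟨(1 - i) * (of y + (1 + 4 * of y) * of k * i), ?_⟩⟩
    rw [show z = 2 * k from hk]
    simp only [map_add, map_mul, map_one, map_ofNat]
    linear_combination (-2) * (of y + (1 + 4 * of y) * of k * i) * i_sq
  · refine ⟨-1, by norm_num, Ideal.mem_span_singleton'.mpr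
      ⟨-1 - (1 - i) * (of y + (2 * of y + (1 + 4 * of y) * of k) * i), ?_⟩⟩
    rw [show z = 2 * k + 1 by linear_combination hk]
    simp only [map_add, map_mul, map_one, map_ofNat]
    linear_combination 2 * (of y + (2 * of y + (1 + 4 * of y) * of k) * i) * i_sq

open PadicInt in
theorem exists_pow_four_eq_of_two_dvd_sub {u v : ℤ_[2]} (huv : 2 ∣ u - v) :
    ∃ B : Z2i, B - 1 ∈ Ideal.span {2 + 2 * i} ∧ B ^ 4 = of (1 + 8 * u) + of (8 * v) * i := by
  obtain ⟨z, hz, n, hn⟩ := exists_tangent_match u v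
  have hc : IsUnit (1 - 24 * z ^ 2 + 16 * z ^ 4) :=
    isUnit_of_dvd_sub_one ⟨-12 * z ^ 2 + 8 * z ^ 4, by ring⟩
  obtain ⟨m, hm⟩ := huv
  obtain ⟨j, hj⟩ := two_dvd_mul_add_one z
  -- `1 + 8 u - (1 - 24 z ^ 2 + 16 z ^ 4) = 16 (m - n + j + z ^ 2 - z ^ 4)`, so dividing by the
  -- unit gives `1 + 8 u = (1 - 24 z ^ 2 + 16 z ^ 4) (1 + 16 q)`
  obtain ⟨q, hq⟩ := hc.dvd (a := m - n + j + z ^ 2 - z ^ 4)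
  obtain ⟨y, hy⟩ := exists_one_add_four_mul_pow_four_eq q
  have hre : (1 + 4 * y) ^ 4 * (1 - 24 * z ^ 2 + 16 * z ^ 4) = 1 + 8 * u := by
    linear_combination (1 - 24 * z ^ 2 + 16 * z ^ 4) * hy - 16 * hq - 8 * hm + 8 * hn - 8 * hj
  have him : (1 + 4 * y) ^ 4 * (z - 4 * z ^ 3) = v :=
    mul_left_cancel₀ hc.ne_zero (by linear_combination (z - 4 * z ^ 3) * hre + hz)
  obtain ⟨s, hs4, hs⟩ := exists_sign_mul_sub_one_mem y z
  refine ⟨s * (of (1 + 4 * y) * (1 + of (2 * z) * i)), hs, ?_⟩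
  rw [mul_pow, hs4, one_mul, mul_pow, one_add_two_mul_i_pow_four, ← hre, ← him]
  simp only [map_mul, map_pow]
  ring

open PadicInt in
theorem exists_five_pow_mul_pow_four_eq {u : ℤ_[2]} (hu : 2 ∣ u) (v : ℤ_[2]) :
    ∃ n : ℕ, ∃ B : Z2i, B - 1 ∈ Ideal.span {2 + 2 * i} ∧
      of (1 + 8 * u) + of (8 * v) * i = 5 ^ (2 * n) * B ^ 4 := by
  rcases two_dvd_or_two_dvd_sub_one v with hv | hv
  · obtain ⟨B, hB, hB4⟩ := exists_pow_four_eq_of_two_dvd_sub (dvd_sub hu hv)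
    exact ⟨0, B, hB, by rw [hB4]; ring⟩
  -- for odd `v`, divide by `25 = 1 + 8 * 3`
  have h25 : IsUnit (25 : ℤ_[2]) := isUnit_of_dvd_sub_one ⟨12, by norm_num⟩
  obtain ⟨u', hu'⟩ := h25.dvd (a := u - 3)
  obtain ⟨v', hv'⟩ := h25.dvd (a := v)
  obtain ⟨a, ha⟩ := hu
  obtain ⟨b, hb⟩ := hv
  obtain ⟨B, hB, hB4⟩ := exists_pow_four_eq_of_two_dvd_sub (u := u') (v := v')
    ⟨a - b - 2 - 12 * (u' - v'), by linear_combination -hu' + hv' + ha - hb⟩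
  refine ⟨1, B, hB, ?_⟩
  rw [hB4, show u = 25 * u' + 3 by linear_combination hu', hv']
  simp only [map_add, map_mul, map_one, map_ofNat]
  ring

end Z2i

theorem statement9 (a b a' b' : ℤ_[2])
    (h : a ^ 2 + b ^ 2 = 1) (h' : a' ^ 2 + b' ^ 2 = 1)
    (hcase :
      (IsUnit a ∧ IsUnit a' ∧ (4 : ℤ_[2]) ∣ a - a' ∧ (8 : ℤ_[2]) ∣ b - b') ∨
      (IsUnit b ∧ IsUnit b' ∧ (4 : ℤ_[2]) ∣ b - b' ∧ (8 : ℤ_[2]) ∣ a - a')) :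
    IsUnit (Z2i.of a + Z2i.of b * Z2i.i) ∧
    ∃ (u5 : Z2iˣ) (t : ℤ) (B : Z2i),
      (u5 : Z2i) = 5 ∧
      B - 1 ∈ Ideal.span {(2 + 2 * Z2i.i : Z2i)} ∧
      Z2i.of a' + Z2i.of b' * Z2i.i =
        (↑(u5 ^ (2 * t)) : Z2i) * B ^ 4 * (Z2i.of a + Z2i.of b * Z2i.i) := by
  have hw : (Z2i.of a + Z2i.of b * Z2i.i) * (Z2i.of a - Z2i.of b * Z2i.i) = 1 := by
    simp [Z2i.mul_conj, ← sq, h]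
  refine ⟨.of_mul_eq_one _ hw, ?_⟩
  obtain ⟨hc, hd⟩ : 4 ∣ a * a' + b * b' - 1 ∧ 8 ∣ a * b' - a' * b := by
    rcases hcase with ⟨ha, -, haa, hbb⟩ | ⟨hb, -, hbb, haa⟩
    · exact PadicInt.four_dvd_sub_one_and_eight_dvd ha h haa hbb
    · obtain ⟨hc, hd⟩ :=
        PadicInt.four_dvd_sub_one_and_eight_dvd hb (by linear_combination h) hbb haa
      exact ⟨by convert hc using 2; ring, dvd_neg.mp (by convert hd using 1; ring)⟩
  obtain ⟨u, hu⟩ := PadicInt.thirty_two_dvd_sub_one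
    (by linear_combination (a' ^ 2 + b' ^ 2) * h + h') hc hd
  obtain ⟨v, hv⟩ := hd
  obtain ⟨n, B, hB, hB4⟩ :=
    Z2i.exists_five_pow_mul_pow_four_eq (u := 4 * u) ⟨2 * u, by ring⟩ v
  refine ⟨Z2i.isUnit_five.unit, n, B, Z2i.isUnit_five.unit_spec, hB, ?_⟩
  rw [show 2 * (n : ℤ) = (2 * n : ℕ) by push_cast; ring, zpow_natCast, Units.val_pow_eq_pow_val,
    Z2i.isUnit_five.unit_spec, ← hB4,
    show 1 + 8 * (4 * u) = a * a' + b * b' by linear_combination -hu,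
    ← hv, ← Z2i.mul_conj, mul_assoc, mul_comm (Z2i.of a - _), hw, mul_one]
end
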